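/- arXiv:0901.4914 — 4 statements merged into one kernel-verified Lean document; each statement's English description precedes it below -/
import Mathlib

section
/- Let η and η' be integrable random vectors in ℝ^n defined on (possibly different) probability spaces. If E((⟨u,η⟩ + u₀)₊) = E((⟨u,η'⟩ + u₀)₊) for every u₀ ∈ ℝ and every u ∈ ℝ^n, then η and η' have the same distribution. -/
/-!
By Cramér–Wold (a finite measure on a separable Banach space is determined by its characteristic
function, hence by its images under continuous linear functionals) it suffices to treat real
random variables. For those, the right derivative of the call price `c ↦ E((X + c)₊)` is
`P(X ≥ -c)`: the difference quotients of `x ↦ (x + c)₊` are bounded by `1` and converge to the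
indicator of `[-c, ∞)`, so dominated convergence applies. Equal call prices therefore give equal
distribution functions.
-/

open MeasureTheory Filter Topology Set

lemma tendsto_slope_max_zero (x : ℝ) :
    Tendsto (fun ε : ℝ => (max (x + ε) 0 - max x 0) / ε) (𝓝[>] 0)
      (𝓝 ((Ici 0).indicator 1 x)) := by
  rcases le_or_gt 0 x with hx | hx
  · rw [indicator_of_mem (mem_Ici.mpr hx)]
    refine tendsto_const_nhds.congr' (eventually_nhdsWithin_of_forall fun ε (hε : 0 < ε) => ?_)
    show (1 : ℝ) = (max (x + ε) 0 - max x 0) / ε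
    rw [max_eq_left (by linarith : 0 ≤ x + ε), max_eq_left hx, add_sub_cancel_left, div_self hε.ne']
  · rw [indicator_of_notMem (notMem_Ici.mpr hx)]
    refine tendsto_const_nhds.congr' ?_
    filter_upwards [Ioo_mem_nhdsGT (neg_pos.mpr hx)] with ε hε
    rw [max_eq_right (by linarith [hε.2]), max_eq_right hx.le, sub_self, zero_div]

lemma norm_slope_max_zero_le_one (x : ℝ) {ε : ℝ} (hε : 0 < ε) :
    ‖(max (x + ε) 0 - max x 0) / ε‖ ≤ 1 := by
  rw [norm_div, Real.norm_eq_abs, Real.norm_of_nonneg hε.le, div_le_one hε]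
  simpa [abs_of_pos hε] using abs_max_sub_max_le_abs (x + ε) x 0

lemma tendsto_integral_slope_max_add {μ : Measure ℝ} [IsFiniteMeasure μ]
    (hμ : Integrable id μ) (c : ℝ) :
    Tendsto (fun ε => (∫ x, max (x + (c + ε)) 0 ∂μ - ∫ x, max (x + c) 0 ∂μ) / ε) (𝓝[>] 0)
      (𝓝 (μ.real (Ici (-c)))) := by
  have hpay : ∀ c, Integrable (fun x => max (x + c) 0) μ :=
    fun c => (hμ.add (integrable_const c)).pos_part
  have hslope : ∀ ε, (∫ x, max (x + (c + ε)) 0 ∂μ - ∫ x, max (x + c) 0 ∂μ) / ε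
      = ∫ x, (max (x + c + ε) 0 - max (x + c) 0) / ε ∂μ := fun ε => by
    rw [integral_div, ← integral_sub (hpay _) (hpay _)]
    simp only [add_assoc]
  have hlim : ∫ x, (Ici 0).indicator 1 (x + c) ∂μ = μ.real (Ici (-c)) := by
    rw [← integral_indicator_one measurableSet_Ici]
    congr 1 with x
    simp only [indicator_apply, mem_Ici, neg_le_iff_add_nonneg, Pi.one_apply]
  simp only [hslope, ← hlim]
  refine tendsto_integral_filter_of_dominated_convergence (fun _ => 1) ?_ ?_
    (integrable_const 1) (ae_of_all _ fun x => tendsto_slope_max_zero (x + c))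
  · exact Eventually.of_forall fun ε => (by fun_prop : Continuous _).aestronglyMeasurable
  · exact eventually_nhdsWithin_of_forall fun ε hε =>
      ae_of_all _ fun x => norm_slope_max_zero_le_one (x + c) hε

theorem MeasureTheory.Measure.ext_of_integral_max_add_eq {μ ν : Measure ℝ}
    [IsFiniteMeasure μ] [IsFiniteMeasure ν] (hμ : Integrable id μ) (hν : Integrable id ν)
    (h : ∀ c, ∫ x, max (x + c) 0 ∂μ = ∫ x, max (x + c) 0 ∂ν) : μ = ν := by
  refine Measure.ext_of_Ici μ ν fun a => ?_
  have hμa := tendsto_integral_slope_max_add hμ (-a)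
  have hνa := tendsto_integral_slope_max_add hν (-a)
  simp only [h, neg_neg] at hμa hνa
  exact (measureReal_eq_measureReal_iff).mp (tendsto_nhds_unique hμa hνa)

theorem map_eq_map_of_integral_max_add_eq {Ω Ω' : Type*} [MeasurableSpace Ω] [MeasurableSpace Ω']
    {P : Measure Ω} {P' : Measure Ω'} [IsFiniteMeasure P] [IsFiniteMeasure P']
    {X : Ω → ℝ} {Y : Ω' → ℝ} (hX : Integrable X P) (hY : Integrable Y P')
    (h : ∀ c, ∫ ω, max (X ω + c) 0 ∂P = ∫ ω, max (Y ω + c) 0 ∂P') :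
    P.map X = P'.map Y := by
  refine Measure.ext_of_integral_max_add_eq
    ((integrable_map_measure aestronglyMeasurable_id hX.aemeasurable).mpr hX)
    ((integrable_map_measure aestronglyMeasurable_id hY.aemeasurable).mpr hY) fun c => ?_
  have hpay : Continuous fun x : ℝ => max (x + c) 0 := by fun_prop
  rw [integral_map hX.aemeasurable hpay.aestronglyMeasurable,
    integral_map hY.aemeasurable hpay.aestronglyMeasurable]
  exact h c

theorem MeasureTheory.Measure.ext_of_map_strongDual {E : Type*} [NormedAddCommGroup E]
    [NormedSpace ℝ E] [CompleteSpace E] [MeasurableSpace E] [BorelSpace E]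
    [SecondCountableTopology E] {μ ν : Measure E} [IsFiniteMeasure μ] [IsFiniteMeasure ν]
    (h : ∀ L : StrongDual ℝ E, μ.map L = ν.map L) : μ = ν :=
  Measure.ext_of_charFunDual <| funext fun L => by
    rw [charFunDual_eq_charFun_map_one, charFunDual_eq_charFun_map_one, h]

lemma StrongDual.apply_eq_sum_single_mul {ι : Type*} [Fintype ι] [DecidableEq ι]
    (L : StrongDual ℝ (ι → ℝ)) (x : ι → ℝ) :
    L x = ∑ l, L (Pi.single l 1) * x l := by
  conv_lhs => rw [← Finset.univ_sum_single x]
  simp only [map_sum]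
  refine Finset.sum_congr rfl fun l _ => ?_
  rw [mul_comm, ← smul_eq_mul, ← map_smul, ← Pi.single_smul', smul_eq_mul, mul_one]

/-- If two integrable random vectors in ℝⁿ (possibly on different
probability spaces) have the same expected basket payoffs
`E((⟨u,η⟩ + u₀)₊)` for all strikes `u₀ ∈ ℝ` and weights `u ∈ ℝⁿ`, then they have
the same distribution. -/
theorem stmt_0 {n : ℕ} {Ω Ω' : Type*}
    [MeasurableSpace Ω] [MeasurableSpace Ω']
    (P : Measure Ω) (P' : Measure Ω')
    [IsProbabilityMeasure P] [IsProbabilityMeasure P']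
    (η : Ω → Fin n → ℝ) (η' : Ω' → Fin n → ℝ)
    (hη : Integrable η P) (hη' : Integrable η' P')
    (h : ∀ (u₀ : ℝ) (u : Fin n → ℝ),
        ∫ ω, max (∑ l, u l * η ω l + u₀) 0 ∂P
          = ∫ ω, max (∑ l, u l * η' ω l + u₀) 0 ∂P') :
    Measure.map η P = Measure.map η' P' := by
  refine Measure.ext_of_map_strongDual fun L => ?_
  rw [AEMeasurable.map_map_of_aemeasurable L.continuous.aemeasurable hη.aemeasurable,
    AEMeasurable.map_map_of_aemeasurable L.continuous.aemeasurable hη'.aemeasurable]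
  refine map_eq_map_of_integral_max_add_eq (L.integrable_comp hη) (L.integrable_comp hη')
    fun c => ?_
  simpa only [Function.comp_apply, ← L.apply_eq_sum_single_mul] using h c fun l => L (Pi.single l 1)
end

section
/- Let η be an integrable random vector in ℝ^n with a.s. strictly positive coordinates, defined on a probability space (Ω,F,Q), and let i < j in {1,…,n}. Define the probability measure Q^j by dQ^j/dQ = η_j / E(η_j), and let κ̃_j(η) = (η_1/η_j, …, η_{j−1}/η_j, η_{j+1}/η_j, …, η_n/η_j) ∈ ℝ^{n−1}. Then η is ij-swap-invariant under Q if and only if the (n−1)-dimensional random vector κ̃_j(η) is self-dual with respect to its i-th numeraire under Q^j. -/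
/-!
Change of numeraire: integrating against `Q^j` is integrating `η_j / E η_j` times the integrand
against `Q`, and positive homogeneity of `x ↦ x₊` gives
`η_j (Σ u_l η_l / η_j + u₀)₊ = (Σ u_l η_l + u₀ η_j)₊`. Hence the `Q^j`-payoff of `(u₀, u)` is
`1 / E η_j` times the `Q`-payoff of the vector `v` with `v_j = u₀` and `v_l = u_l` otherwise, and
interchanging `u₀` with `u_i` turns `v` into `v ∘ π_ij`. As `(u₀, u) ↦ v` is a bijection, the two
invariance properties are the same statement.
-/

open MeasureTheory

section SplitAt

variable {ι : Type*} [DecidableEq ι]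

lemma Equiv.funSplitAt_symm_comp_swap {α : Type*} {i j : ι} (hij : i ≠ j) (a : α)
    (u : {l // l ≠ j} → α) :
    (Equiv.funSplitAt j α).symm (a, u) ∘ Equiv.swap i j
      = (Equiv.funSplitAt j α).symm (u ⟨i, hij⟩, Function.update u ⟨i, hij⟩ a) := by
  funext l
  rcases eq_or_ne l i with rfl | hli
  · simp [hij]
  rcases eq_or_ne l j with rfl | hlj
  · simp [hij]
  · have hne : (⟨l, hlj⟩ : {l // l ≠ j}) ≠ ⟨i, hij⟩ := by simpa [Subtype.ext_iff] using hli
    simp [Equiv.swap_apply_of_ne_of_ne hli hlj, hlj, Function.update_of_ne hne]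

lemma forall_eq_comp_swap_iff {α β : Type*} {i j : ι} (hij : i ≠ j) (F : (ι → α) → β) :
    (∀ v, F v = F (v ∘ Equiv.swap i j)) ↔
      ∀ a u, F ((Equiv.funSplitAt j α).symm (a, u))
        = F ((Equiv.funSplitAt j α).symm (u ⟨i, hij⟩, Function.update u ⟨i, hij⟩ a)) := by
  simp only [(Equiv.funSplitAt j α).symm.surjective.forall, Prod.forall,
    Equiv.funSplitAt_symm_comp_swap hij]

variable [Fintype ι]

lemma sum_funSplitAt_symm_mul {R : Type*} [NonUnitalNonAssocSemiring R] (j : ι) (a : R)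
    (u : {l // l ≠ j} → R) (x : ι → R) :
    ∑ l, (Equiv.funSplitAt j R).symm (a, u) l * x l
      = a * x j + ∑ l : {l // l ≠ j}, u l * x l := by
  rw [Fintype.sum_eq_add_sum_subtype_ne _ j]
  congr 1
  · simp
  · exact Finset.sum_congr rfl fun l _ => by simp [l.2]

lemma mul_max_sum_div_add {j : ι} {x : ι → ℝ} (hj : 0 < x j) (a : ℝ)
    (u : {l // l ≠ j} → ℝ) :
    x j * max (∑ l : {l // l ≠ j}, u l * (x l / x j) + a) 0
      = max (∑ l, (Equiv.funSplitAt j ℝ).symm (a, u) l * x l) 0 := by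
  rw [mul_max_of_nonneg _ _ hj.le, mul_zero, sum_funSplitAt_symm_mul, mul_add, Finset.mul_sum]
  congr 1
  rw [add_comm, mul_comm]
  congr 1
  refine Finset.sum_congr rfl fun l _ => ?_
  field_simp

end SplitAt

section Density

variable {Ω : Type*} [MeasurableSpace Ω] {μ : Measure Ω}

lemma integral_pos_of_ae_pos [NeZero μ] {f : Ω → ℝ} (hf : ∀ᵐ ω ∂μ, 0 < f ω)
    (hfi : Integrable f μ) : 0 < ∫ ω, f ω ∂μ := by
  rw [integral_pos_iff_support_of_nonneg_ae (hf.mono fun _ h => h.le) hfi,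
    measure_congr (ae_eq_univ.mpr (mem_ae_iff.mp (hf.mono fun _ h => h.ne') :
      μ (Function.support f)ᶜ = 0))]
  exact Measure.measure_univ_pos.mpr (NeZero.ne μ)

lemma integral_withDensity_ofReal {f : Ω → ℝ} (hf : AEMeasurable f μ) (hf0 : 0 ≤ᵐ[μ] f)
    (g : Ω → ℝ) :
    ∫ ω, g ω ∂μ.withDensity (fun ω => ENNReal.ofReal (f ω)) = ∫ ω, f ω * g ω ∂μ := by
  calc _ = ∫ ω, (f ω).toNNReal • g ω ∂μ :=
        integral_withDensity_eq_integral_smul₀ hf.real_toNNReal g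
    _ = _ := integral_congr_ae (hf0.mono fun ω h => by
      simp only [NNReal.smul_def, smul_eq_mul, Real.coe_toNNReal _ h])

end Density

lemma integral_max_sum_div_add_withDensity {Ω ι : Type*} [MeasurableSpace Ω] {μ : Measure Ω}
    [Fintype ι] [DecidableEq ι] {η : Ω → ι → ℝ} {j : ι}
    (hηj : AEMeasurable (fun ω => η ω j) μ) (hpos : ∀ᵐ ω ∂μ, 0 < η ω j) {c : ℝ} (hc : 0 ≤ c)
    (a : ℝ) (u : {l // l ≠ j} → ℝ) :
    ∫ ω, max ((∑ l : {l // l ≠ j}, u l * (η ω l.1 / η ω j)) + a) 0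
        ∂(μ.withDensity fun ω => ENNReal.ofReal (η ω j / c))
      = c⁻¹ * ∫ ω, max (∑ l, (Equiv.funSplitAt j ℝ).symm (a, u) l * η ω l) 0 ∂μ := by
  rw [integral_withDensity_ofReal (hηj.div_const c) (hpos.mono fun _ h => by positivity),
    ← integral_const_mul]
  refine integral_congr_ae (hpos.mono fun ω h => ?_)
  dsimp only
  rw [← mul_max_sum_div_add h]
  ring

/-- For `i < j`, an integrable a.s. positive random vector `η` in
ℝⁿ is `ij`-swap-invariant under `Q` iff the `(n-1)`-dimensional vector
`κ̃_j(η) = (η_l/η_j)_{l ≠ j}` is self-dual with respect to its `i`-th numeraire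
under the measure `Q^j` with density `η_j / E η_j` with respect to `Q`.
Self-duality w.r.t. the `i`-th numeraire means that the expected basket payoff
is unchanged when the strike `u₀` and the `i`-th weight `u_i` are
interchanged. -/
theorem stmt_7 {n : ℕ} {Ω : Type*} [MeasurableSpace Ω]
    (Q : Measure Ω) [IsProbabilityMeasure Q]
    (η : Ω → Fin n → ℝ) (hη : Integrable η Q)
    (hpos : ∀ᵐ ω ∂Q, ∀ l, 0 < η ω l)
    (i j : Fin n) (hij : i < j) :
    (∀ u : Fin n → ℝ,
        ∫ ω, max (∑ l, u l * η ω l) 0 ∂Q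
          = ∫ ω, max (∑ l, u (Equiv.swap i j l) * η ω l) 0 ∂Q)
      ↔
    (∀ (u₀ : ℝ) (u : {l : Fin n // l ≠ j} → ℝ),
        ∫ ω, max ((∑ l : {l : Fin n // l ≠ j}, u l * (η ω l.1 / η ω j)) + u₀) 0
            ∂(Q.withDensity fun ω => ENNReal.ofReal (η ω j / ∫ ω', η ω' j ∂Q))
          = ∫ ω, max ((∑ l : {l : Fin n // l ≠ j},
                  Function.update u ⟨i, hij.ne⟩ u₀ l * (η ω l.1 / η ω j))
                + u ⟨i, hij.ne⟩) 0
            ∂(Q.withDensity fun ω => ENNReal.ofReal (η ω j / ∫ ω', η ω' j ∂Q))) := by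
  have hηj : Integrable (fun ω => η ω j) Q := hη.eval j
  have hposj : ∀ᵐ ω ∂Q, 0 < η ω j := hpos.mono fun _ h => h j
  have hc : 0 < ∫ ω, η ω j ∂Q := integral_pos_of_ae_pos hposj hηj
  refine (forall_eq_comp_swap_iff hij.ne fun v => ∫ ω, max (∑ l, v l * η ω l) 0 ∂Q).trans
    (forall₂_congr fun a u => ?_)
  rw [integral_max_sum_div_add_withDensity hηj.aemeasurable hposj hc.le,
    integral_max_sum_div_add_withDensity hηj.aemeasurable hposj hc.le,
    mul_right_inj' (inv_ne_zero hc.ne')]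
end

section
/- Let η = (η_1,η_2) be an integrable random vector with a.s. strictly positive coordinates on (Ω,F,Q) with E(η_1) = 1, define Q^1 by dQ^1/dQ = η_1, and set η̃ = η_2/η_1. Then η is 12-swap-invariant under Q (i.e. E_Q((u_1η_1+u_2η_2)₊) = E_Q((u_1η_2+u_2η_1)₊) for all u_1,u_2 ∈ ℝ) if and only if η̃ satisfies the put-call symmetry E_{Q^1}((u_1 η̃ + u_2)₊) = E_{Q^1}((u_1 + u_2 η̃)₊) for all u_1,u_2 ∈ ℝ. -/
open MeasureTheory

/-! Under `Q¹` the payoff `(a η̃ + b)₊` integrates, after multiplying by the density `η₁` and using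
positive homogeneity of `x ↦ x₊`, to `E_Q (a η₂ + b η₁)₊`. So both conditions say that
`C a b := E_Q (a η₂ + b η₁)₊` is symmetric in `a` and `b`. -/

theorem integral_withDensity_ofReal_eq_integral_smul {X E : Type*} [MeasurableSpace X]
    [NormedAddCommGroup E] [NormedSpace ℝ E] {μ : Measure X} {f : X → ℝ}
    (hf : AEMeasurable f μ) (hf₀ : 0 ≤ᵐ[μ] f) (g : X → E) :
    ∫ x, g x ∂μ.withDensity (fun x => ENNReal.ofReal (f x)) = ∫ x, f x • g x ∂μ := by
  rw [integral_withDensity_eq_integral_toReal_smul₀ hf.ennreal_ofReal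
    (ae_of_all _ fun _ => ENNReal.ofReal_lt_top)]
  refine integral_congr_ae ?_
  filter_upwards [hf₀] with x hx
  rw [ENNReal.toReal_ofReal hx]

theorem mul_max_mul_div_add_zero {x : ℝ} (hx : 0 < x) (a b y : ℝ) :
    x * max (a * (y / x) + b) 0 = max (a * y + b * x) 0 := by
  rw [mul_max_of_nonneg _ _ hx.le, mul_zero]
  congr 1
  field_simp

theorem integral_max_ratio_withDensity {Ω : Type*} [MeasurableSpace Ω] {Q : Measure Ω}
    {η₁ : Ω → ℝ} (hη₁ : AEMeasurable η₁ Q) (hpos : ∀ᵐ ω ∂Q, 0 < η₁ ω) (η₂ : Ω → ℝ) (a b : ℝ) :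
    ∫ ω, max (a * (η₂ ω / η₁ ω) + b) 0 ∂(Q.withDensity fun ω => ENNReal.ofReal (η₁ ω))
      = ∫ ω, max (a * η₂ ω + b * η₁ ω) 0 ∂Q := by
  rw [integral_withDensity_ofReal_eq_integral_smul hη₁ (hpos.mono fun _ h => h.le)]
  refine integral_congr_ae ?_
  filter_upwards [hpos] with ω hω
  exact mul_max_mul_div_add_zero hω a b (η₂ ω)

theorem stmt_8_general {Ω : Type*} [MeasurableSpace Ω]
    (Q : Measure Ω)
    (η₁ η₂ : Ω → ℝ) (h₁ : Integrable η₁ Q)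
    (hpos : ∀ᵐ ω ∂Q, 0 < η₁ ω ∧ 0 < η₂ ω) :
    (∀ u₁ u₂ : ℝ,
        ∫ ω, max (u₁ * η₁ ω + u₂ * η₂ ω) 0 ∂Q
          = ∫ ω, max (u₁ * η₂ ω + u₂ * η₁ ω) 0 ∂Q)
      ↔
    (∀ u₁ u₂ : ℝ,
        ∫ ω, max (u₁ * (η₂ ω / η₁ ω) + u₂) 0
            ∂(Q.withDensity fun ω => ENNReal.ofReal (η₁ ω))
          = ∫ ω, max (u₁ + u₂ * (η₂ ω / η₁ ω)) 0
            ∂(Q.withDensity fun ω => ENNReal.ofReal (η₁ ω))) := by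
  have key := integral_max_ratio_withDensity h₁.aemeasurable (hpos.mono fun _ h => h.1) η₂
  simp only [add_comm _ (_ * (η₂ _ / η₁ _)), key, add_comm (_ * η₁ _)]
  exact ⟨fun h u₁ u₂ => (h u₁ u₂).symm, fun h u₁ u₂ => (h u₁ u₂).symm⟩

/-- A bivariate integrable a.s. positive random vector
`η = (η₁, η₂)` with `E η₁ = 1` is 12-swap-invariant under `Q` iff
`η̃ = η₂/η₁` satisfies the classical put-call symmetry
`E_{Q¹}((u₁ η̃ + u₂)₊) = E_{Q¹}((u₁ + u₂ η̃)₊)` under the measure `Q¹` with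
density `η₁` with respect to `Q`. -/
theorem stmt_8 {Ω : Type*} [MeasurableSpace Ω]
    (Q : Measure Ω) [IsProbabilityMeasure Q]
    (η₁ η₂ : Ω → ℝ) (h₁ : Integrable η₁ Q) (h₂ : Integrable η₂ Q)
    (hpos : ∀ᵐ ω ∂Q, 0 < η₁ ω ∧ 0 < η₂ ω)
    (hmean : ∫ ω, η₁ ω ∂Q = 1) :
    (∀ u₁ u₂ : ℝ,
        ∫ ω, max (u₁ * η₁ ω + u₂ * η₂ ω) 0 ∂Q
          = ∫ ω, max (u₁ * η₂ ω + u₂ * η₁ ω) 0 ∂Q)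
      ↔
    (∀ u₁ u₂ : ℝ,
        ∫ ω, max (u₁ * (η₂ ω / η₁ ω) + u₂) 0
            ∂(Q.withDensity fun ω => ENNReal.ofReal (η₁ ω))
          = ∫ ω, max (u₁ + u₂ * (η₂ ω / η₁ ω)) 0
            ∂(Q.withDensity fun ω => ENNReal.ofReal (η₁ ω))) :=
  stmt_8_general Q η₁ η₂ h₁ hpos
end

section
/- Let (ξ_1,ξ_2) be a bivariate Gaussian random vector with covariance matrix A = (a_{lm}) and mean (μ_1,μ_2) = (−a_{11}/2, −a_{22}/2) (the risk-neutral case, so E e^{ξ_1} = E e^{ξ_2} = 1), and set η = (e^{ξ_1}, e^{ξ_2}). Then η is swap-invariant: E((u_1η_1 + u_2η_2)₊) = E((u_1η_2 + u_2η_1)₊) for all (u_1,u_2) ∈ ℝ², regardless of the values of a_{11}, a_{22}, a_{12}. -/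
/-!
Let `σ² = a₁₁ + a₂₂ - 2 a₁₂`. Gaussianity gives
`E exp (s ξ₁ + (1 - s) ξ₂) = exp (σ² (s² - s) / 2)`. In particular `E e^{ξ₂} = 1`, so
`Q = e^{ξ₂} dP` is a probability measure and `E (u₁ e^{ξ₁} + u₂ e^{ξ₂})₊ = E_Q (u₁ e^{ξ₁ - ξ₂} + u₂)₊`.
The same moment formula is the moment generating function of `ξ₁ - ξ₂` under `Q`, which is
therefore `N(-σ²/2, σ²)`. Since the formula is invariant under `s ↦ 1 - s`, i.e. under exchanging
`ξ₁` and `ξ₂`, both sides of the swap identity are the same Gaussian integral.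
-/

open MeasureTheory ProbabilityTheory Real
open scoped NNReal

lemma MeasureTheory.Measure.eq_of_mgf_id_eq {μ μ' : Measure ℝ} [IsProbabilityMeasure μ]
    [IsFiniteMeasure μ'] (hμ : integrableExpSet id μ = Set.univ) (h : mgf id μ = mgf id μ') :
    μ = μ' :=
  Measure.ext_of_complexMGF_id_eq <| funext fun z ↦ eqOn_complexMGF_of_mgf h (by simp [hμ])

lemma Matrix.PosSemidef.fin_two_quadratic_nonneg {A : Matrix (Fin 2) (Fin 2) ℝ}
    (hA : A.PosSemidef) (x y : ℝ) : 0 ≤ x ^ 2 * A 0 0 + 2 * x * y * A 0 1 + y ^ 2 * A 1 1 := by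
  have hsymm : A 1 0 = A 0 1 := by simpa using hA.isHermitian.apply 0 1
  have := hA.dotProduct_mulVec_nonneg ![x, y]
  simp [dotProduct, Matrix.mulVec, Fin.sum_univ_two, hsymm] at this
  linarith

lemma exp_mul_max_exp_sub (u₁ u₂ x y : ℝ) :
    exp y * max (u₁ * exp (x - y) + u₂) 0 = max (u₁ * exp x + u₂ * exp y) 0 := by
  rw [mul_max_of_nonneg _ _ (exp_pos y).le, mul_zero, exp_sub]
  congr 1
  field_simp

section

variable {Ω : Type*} [MeasurableSpace Ω] {P : Measure Ω}

lemma integral_map_tilted {Y Z : Ω → ℝ} (hZ : AEMeasurable Z P) (hY : ∫ ω, exp (Y ω) ∂P = 1)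
    {g : ℝ → ℝ} (hg : Measurable g) :
    ∫ z, g z ∂(P.tilted Y).map Z = ∫ ω, exp (Y ω) * g (Z ω) ∂P := by
  rw [integral_map (hZ.mono_ac (tilted_absolutelyContinuous P Y)) hg.aestronglyMeasurable,
    integral_tilted, hY]
  simp only [div_one, smul_eq_mul]

lemma map_sub_tilted_eq_gaussianReal {X Y : Ω → ℝ} (hX : AEMeasurable X P)
    (hY : AEMeasurable Y P) (v : ℝ≥0)
    (h : ∀ s, ∫ ω, exp (s * X ω + (1 - s) * Y ω) ∂P = exp (v * (s ^ 2 - s) / 2)) :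
    (P.tilted Y).map (fun ω ↦ X ω - Y ω) = gaussianReal (-v / 2) v := by
  have hY1 : ∫ ω, exp (Y ω) ∂P = 1 := by simpa using h 0
  refine (Measure.eq_of_mgf_id_eq integrableExpSet_id_gaussianReal (funext fun t ↦ ?_)).symm
  rw [mgf_id_gaussianReal, mgf, integral_map_tilted (Z := fun ω ↦ X ω - Y ω) (hX.sub hY) hY1
    (by fun_prop)]
  calc exp (-v / 2 * t + v * t ^ 2 / 2)
      = ∫ ω, exp (t * X ω + (1 - t) * Y ω) ∂P := by rw [h]; congr 1; ring
    _ = ∫ ω, exp (Y ω) * exp (t * id (X ω - Y ω)) ∂P := by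
        congr 1 with ω
        rw [← exp_add, id]
        ring_nf

lemma integral_max_exp_add_exp_eq_integral_map_tilted {X Y : Ω → ℝ} (hX : AEMeasurable X P)
    (hY : AEMeasurable Y P) (hY1 : ∫ ω, exp (Y ω) ∂P = 1) (u₁ u₂ : ℝ) :
    ∫ ω, max (u₁ * exp (X ω) + u₂ * exp (Y ω)) 0 ∂P
      = ∫ z, max (u₁ * exp z + u₂) 0 ∂(P.tilted Y).map (fun ω ↦ X ω - Y ω) := by
  rw [integral_map_tilted (Z := fun ω ↦ X ω - Y ω) (hX.sub hY) hY1 (by fun_prop)]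
  simp_rw [exp_mul_max_exp_sub]

theorem integral_max_exp_add_exp_swap {X Y : Ω → ℝ} (hX : AEMeasurable X P)
    (hY : AEMeasurable Y P) (v : ℝ≥0)
    (h : ∀ s, ∫ ω, exp (s * X ω + (1 - s) * Y ω) ∂P = exp (v * (s ^ 2 - s) / 2))
    (u₁ u₂ : ℝ) :
    ∫ ω, max (u₁ * exp (X ω) + u₂ * exp (Y ω)) 0 ∂P
      = ∫ ω, max (u₁ * exp (Y ω) + u₂ * exp (X ω)) 0 ∂P := by
  have h' : ∀ s, ∫ ω, exp (s * Y ω + (1 - s) * X ω) ∂P = exp (v * (s ^ 2 - s) / 2) := by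
    intro s
    convert h (1 - s) using 3 with ω
    · ring_nf
    · ring
  rw [integral_max_exp_add_exp_eq_integral_map_tilted hX hY (by simpa using h 0),
    integral_max_exp_add_exp_eq_integral_map_tilted hY hX (by simpa using h' 0),
    map_sub_tilted_eq_gaussianReal hX hY v h, map_sub_tilted_eq_gaussianReal hY hX v h']

lemma integral_exp_mul_add_one_sub_mul_of_gaussian {ξ : Ω → Fin 2 → ℝ}
    {A : Matrix (Fin 2) (Fin 2) ℝ} (hA : A.PosSemidef)
    (hGauss : ∀ u : Fin 2 → ℝ,
        Measure.map (fun ω => ∑ l, u l * ξ ω l) P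
          = gaussianReal (∑ l, u l * (-(A l l) / 2)) (∑ l, ∑ k, u l * A l k * u k).toNNReal)
    (s : ℝ) :
    ∫ ω, exp (s * ξ ω 0 + (1 - s) * ξ ω 1) ∂P
      = exp ((A 0 0 + A 1 1 - 2 * A 0 1) * (s ^ 2 - s) / 2) := by
  have hsymm : A 1 0 = A 0 1 := by simpa using hA.isHermitian.apply 0 1
  set u : Fin 2 → ℝ := ![s, 1 - s] with hu
  have hvar : 0 ≤ ∑ l, ∑ k, u l * A l k * u k := by
    simp only [hu, Fin.sum_univ_two, Matrix.cons_val_zero, Matrix.cons_val_one, hsymm]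
    linarith [hA.fin_two_quadratic_nonneg s (1 - s)]
  have := mgf_gaussianReal (hGauss u) 1
  simp only [mgf, one_mul, one_pow, mul_one, Real.coe_toNNReal _ hvar] at this
  simp only [hu, Fin.sum_univ_two, Matrix.cons_val_zero, Matrix.cons_val_one] at this
  rw [this, hsymm]
  congr 1
  ring

end

theorem stmt_17_general {Ω : Type*} [MeasurableSpace Ω]
    (P : Measure Ω)
    (ξ : Ω → Fin 2 → ℝ) (hmeas : AEMeasurable ξ P)
    (A : Matrix (Fin 2) (Fin 2) ℝ) (hA : A.PosSemidef)
    (hGauss : ∀ u : Fin 2 → ℝ,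
        Measure.map (fun ω => ∑ l, u l * ξ ω l) P
          = gaussianReal (∑ l, u l * (-(A l l) / 2)) (∑ l, ∑ k, u l * A l k * u k).toNNReal) :
    ∀ u₁ u₂ : ℝ,
      ∫ ω, max (u₁ * Real.exp (ξ ω 0) + u₂ * Real.exp (ξ ω 1)) 0 ∂P
        = ∫ ω, max (u₁ * Real.exp (ξ ω 1) + u₂ * Real.exp (ξ ω 0)) 0 ∂P := by
  have hvar : 0 ≤ A 0 0 + A 1 1 - 2 * A 0 1 := by
    linarith [hA.fin_two_quadratic_nonneg 1 (-1)]
  exact integral_max_exp_add_exp_swap (hmeas.eval 0) (hmeas.eval 1) ⟨_, hvar⟩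
    (integral_exp_mul_add_one_sub_mul_of_gaussian hA hGauss)

/-- Every risk-neutral bivariate lognormal model is
swap-invariant: if `ξ = (ξ₁,ξ₂)` is bivariate Gaussian with covariance matrix
`A` and mean `μ_l = -a_{ll}/2` (so that `E e^{ξ_l} = 1`), then for
`η = (e^{ξ₁}, e^{ξ₂})` one has
`E((u₁η₁ + u₂η₂)₊) = E((u₁η₂ + u₂η₁)₊)` for all `u₁, u₂ ∈ ℝ`, regardless of
`a₁₁, a₂₂, a₁₂`. -/
theorem stmt_17 {Ω : Type*} [MeasurableSpace Ω]
    (P : Measure Ω) [IsProbabilityMeasure P]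
    (ξ : Ω → Fin 2 → ℝ) (hmeas : AEMeasurable ξ P)
    (A : Matrix (Fin 2) (Fin 2) ℝ) (hA : A.PosSemidef)
    (hGauss : ∀ u : Fin 2 → ℝ,
        Measure.map (fun ω => ∑ l, u l * ξ ω l) P
          = gaussianReal (∑ l, u l * (-(A l l) / 2)) (∑ l, ∑ k, u l * A l k * u k).toNNReal) :
    ∀ u₁ u₂ : ℝ,
      ∫ ω, max (u₁ * Real.exp (ξ ω 0) + u₂ * Real.exp (ξ ω 1)) 0 ∂P
        = ∫ ω, max (u₁ * Real.exp (ξ ω 1) + u₂ * Real.exp (ξ ω 0)) 0 ∂P :=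
  stmt_17_general P ξ hmeas A hA hGauss
end
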